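/- Let Σ₁ and Σ₂ be real symmetric positive definite p×p matrices satisfying 2 log det((Σ₁ + Σ₂)/2) − log det Σ₁ − log det Σ₂ ≥ c₄ for some c₄ > 0, and let π₁, π₂ ≥ c₂ > 0. Then for every real symmetric positive definite p×p matrix Σ, Σ_{j=1}^{2} π_j [ tr(Σ_j Σ⁻¹) + log det Σ − log det Σ_j − p ] ≥ c₂ c₄. -/

import Mathlib

open Matrix

/-
Writing `D(B ‖ C) = tr(B C⁻¹) + log det C − log det B − p` (that is,
`2 KL(N(0, B) ‖ N(0, C))`), each `D(Σⱼ ‖ Σ)` is nonnegative: with `C⁻¹ = Rᴴ R`, it equals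
`tr M − log det M − p` for the positive definite `M = R B Rᴴ`, and `log λ ≤ λ − 1` on each
eigenvalue. Since `D(· ‖ Σ)` is affine in the trace term, `D(Σ₁ ‖ Σ) + D(Σ₂ ‖ Σ)` equals
`2 D(Σ̄ ‖ Σ)` plus the log-determinant gap, where `Σ̄ = (Σ₁ + Σ₂)/2`; so the unweighted sum is
at least the gap, and the weights `πⱼ ≥ c₂` finish the bound.
-/

namespace Matrix

variable {n : Type*} [Fintype n] [DecidableEq n]

noncomputable def gaussianDivergence (B C : Matrix n n ℝ) : ℝ :=
  trace (B * C⁻¹) + Real.log C.det - Real.log B.det - Fintype.card n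

theorem PosDef.log_det_add_card_le_trace {M : Matrix n n ℝ} (hM : M.PosDef) :
    Real.log M.det + Fintype.card n ≤ M.trace := by
  rw [hM.isHermitian.det_eq_prod_eigenvalues, hM.isHermitian.trace_eq_sum_eigenvalues]
  simp only [RCLike.ofReal_real_eq_id, id]
  rw [Real.log_prod fun i _ => (hM.eigenvalues_pos i).ne', Finset.card_univ.symm,
    Finset.cast_card, ← Finset.sum_add_distrib]
  exact Finset.sum_le_sum fun i _ => by
    linarith [Real.log_le_sub_one_of_pos (hM.eigenvalues_pos i)]

open scoped MatrixOrder in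
theorem gaussianDivergence_nonneg {B C : Matrix n n ℝ} (hB : B.PosDef) (hC : C.PosDef) :
    0 ≤ gaussianDivergence B C := by
  obtain ⟨R, hR⟩ := CStarAlgebra.nonneg_iff_eq_star_mul_self.mp hC.inv.posSemidef.nonneg
  rw [star_eq_conjTranspose] at hR
  have hdet : (R * B * Rᴴ).det = B.det * C.det⁻¹ := by
    have hC_inv : C.det⁻¹ = Rᴴ.det * R.det := by
      rw [← det_mul, ← hR, det_nonsing_inv, Ring.inverse_eq_inv']
    rw [det_mul, det_mul, hC_inv]
    ring
  have hM : (R * B * Rᴴ).PosDef := by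
    rw [(hB.posSemidef.mul_mul_conjTranspose_same R).posDef_iff_det_ne_zero, hdet]
    exact mul_ne_zero hB.det_pos.ne' (inv_ne_zero hC.det_pos.ne')
  have htrace : (R * B * Rᴴ).trace = trace (B * C⁻¹) := by
    rw [trace_mul_cycle, ← hR, trace_mul_comm]
  have hlog : Real.log (R * B * Rᴴ).det = Real.log B.det - Real.log C.det := by
    rw [hdet, Real.log_mul hB.det_pos.ne' (inv_ne_zero hC.det_pos.ne'), Real.log_inv,
      sub_eq_add_neg]
  have hM_bound := hM.log_det_add_card_le_trace
  rw [htrace, hlog] at hM_bound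
  unfold gaussianDivergence
  linarith

theorem gaussianDivergence_add_gaussianDivergence (B₁ B₂ C : Matrix n n ℝ) :
    gaussianDivergence B₁ C + gaussianDivergence B₂ C =
      2 * gaussianDivergence ((1 / 2 : ℝ) • (B₁ + B₂)) C +
        (2 * Real.log ((1 / 2 : ℝ) • (B₁ + B₂)).det - Real.log B₁.det - Real.log B₂.det) := by
  simp only [gaussianDivergence, smul_mul, trace_smul, add_mul, trace_add, smul_eq_mul]
  ring

theorem log_det_gap_le_gaussianDivergence_add {B₁ B₂ C : Matrix n n ℝ} (h₁ : B₁.PosDef)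
    (h₂ : B₂.PosDef) (hC : C.PosDef) :
    2 * Real.log ((1 / 2 : ℝ) • (B₁ + B₂)).det - Real.log B₁.det - Real.log B₂.det ≤
      gaussianDivergence B₁ C + gaussianDivergence B₂ C := by
  have hmid := gaussianDivergence_nonneg ((h₁.add h₂).smul (by norm_num : (0 : ℝ) < 1 / 2)) hC
  rw [gaussianDivergence_add_gaussianDivergence]
  linarith

end Matrix

theorem common_covariance_excess_risk_lower_bound_general {p : ℕ}
    (S₁ S₂ : Matrix (Fin p) (Fin p) ℝ) (h₁ : S₁.PosDef) (h₂ : S₂.PosDef)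
    (c₂ c₄ : ℝ)
    (hgap : c₄ ≤ 2 * Real.log ((1 / 2 : ℝ) • (S₁ + S₂)).det
        - Real.log S₁.det - Real.log S₂.det)
    (π₁ π₂ : ℝ) (hc₂ : 0 < c₂) (hπ₁ : c₂ ≤ π₁) (hπ₂ : c₂ ≤ π₂)
    (S : Matrix (Fin p) (Fin p) ℝ) (hS : S.PosDef) :
    c₂ * c₄ ≤
      π₁ * (Matrix.trace (S₁ * S⁻¹) + Real.log S.det - Real.log S₁.det - p) +
        π₂ * (Matrix.trace (S₂ * S⁻¹) + Real.log S.det - Real.log S₂.det - p) := by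
  have hsum := hgap.trans (log_det_gap_le_gaussianDivergence_add h₁ h₂ hS)
  have key : c₂ * c₄ ≤ π₁ * gaussianDivergence S₁ S + π₂ * gaussianDivergence S₂ S :=
    calc c₂ * c₄ ≤ c₂ * (gaussianDivergence S₁ S + gaussianDivergence S₂ S) :=
          mul_le_mul_of_nonneg_left hsum hc₂.le
      _ = c₂ * gaussianDivergence S₁ S + c₂ * gaussianDivergence S₂ S := mul_add _ _ _
      _ ≤ π₁ * gaussianDivergence S₁ S + π₂ * gaussianDivergence S₂ S :=
          add_le_add (mul_le_mul_of_nonneg_right hπ₁ (gaussianDivergence_nonneg h₁ hS))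
            (mul_le_mul_of_nonneg_right hπ₂ (gaussianDivergence_nonneg h₂ hS))
  simpa only [gaussianDivergence, Fintype.card_fin] using key

/-- Case 2 of the tree partition consistency theorem: if `Σ₁, Σ₂` are symmetric
positive definite with log-determinant gap
`2 log det((Σ₁+Σ₂)/2) − log det Σ₁ − log det Σ₂ ≥ c₄ > 0`, and weights
`π₁, π₂ ≥ c₂ > 0`, then for every symmetric positive definite `Σ`,
`Σ_{j=1}^2 π_j [tr(Σ_j Σ⁻¹) + log det Σ − log det Σ_j − p] ≥ c₂ c₄`. -/
theorem common_covariance_excess_risk_lower_bound {p : ℕ}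
    (S₁ S₂ : Matrix (Fin p) (Fin p) ℝ) (h₁ : S₁.PosDef) (h₂ : S₂.PosDef)
    (c₂ c₄ : ℝ) (hc₄ : 0 < c₄)
    (hgap : c₄ ≤ 2 * Real.log ((1 / 2 : ℝ) • (S₁ + S₂)).det
        - Real.log S₁.det - Real.log S₂.det)
    (π₁ π₂ : ℝ) (hc₂ : 0 < c₂) (hπ₁ : c₂ ≤ π₁) (hπ₂ : c₂ ≤ π₂)
    (S : Matrix (Fin p) (Fin p) ℝ) (hS : S.PosDef) :
    c₂ * c₄ ≤
      π₁ * (Matrix.trace (S₁ * S⁻¹) + Real.log S.det - Real.log S₁.det - p) +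
        π₂ * (Matrix.trace (S₂ * S⁻¹) + Real.log S.det - Real.log S₂.det - p) :=
  common_covariance_excess_risk_lower_bound_general S₁ S₂ h₁ h₂ c₂ c₄ hgap π₁ π₂ hc₂ hπ₁ hπ₂ S hS
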